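/- Let A ∈ R^{m×n} have rank ρ, let k < ρ, and let V_k ∈ R^{n×k} be the matrix whose columns are the top k right singular vectors of A. Let S ∈ R^{n×r} be any matrix such that rank(V_kᵀ S) = k, and set C = A S. Then for ξ ∈ {2, F}: ‖A − Π^ξ_{C,k}(A)‖_ξ² ≤ ‖A − A_k‖_ξ² + ‖(A − A_k) S (V_kᵀ S)⁺‖_ξ². -/

import Mathlib

open Matrix MeasureTheory

noncomputable def frobSq {m n : Type*} [Fintype m] [Fintype n] (A : Matrix m n ℝ) : ℝ :=
  ∑ i, ∑ j, A i j ^ 2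

noncomputable def spec {m n : Type*} [Fintype m] [Fintype n] [DecidableEq n]
    (A : Matrix m n ℝ) : ℝ :=
  ‖LinearMap.toContinuousLinearMap (Matrix.toEuclideanLin A)‖

noncomputable def specErr {m n : Type*} [Fintype m] [Fintype n] [DecidableEq n]
    (A : Matrix m n ℝ) (k : ℕ) : ℝ :=
  sInf {e : ℝ | ∃ X : Matrix m n ℝ, X.rank ≤ k ∧ e = spec (A - X)}

noncomputable def frobSqErr {m n : Type*} [Fintype m] [Fintype n]
    (A : Matrix m n ℝ) (k : ℕ) : ℝ :=
  sInf {e : ℝ | ∃ X : Matrix m n ℝ, X.rank ≤ k ∧ e = frobSq (A - X)}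

noncomputable def specErrIn {m n r : Type*} [Fintype m] [Fintype n] [DecidableEq n]
    [Fintype r] (A : Matrix m n ℝ) (C : Matrix m r ℝ) (k : ℕ) : ℝ :=
  sInf {e : ℝ | ∃ X : Matrix m n ℝ, X.rank ≤ k ∧
    LinearMap.range X.mulVecLin ≤ LinearMap.range C.mulVecLin ∧ e = spec (A - X)}

noncomputable def frobSqErrIn {m n r : Type*} [Fintype m] [Fintype n] [Fintype r]
    (A : Matrix m n ℝ) (C : Matrix m r ℝ) (k : ℕ) : ℝ :=
  sInf {e : ℝ | ∃ X : Matrix m n ℝ, X.rank ≤ k ∧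
    LinearMap.range X.mulVecLin ≤ LinearMap.range C.mulVecLin ∧ e = frobSq (A - X)}

def IsMoorePenrose {m n : Type*} [Fintype m] [Fintype n]
    (M : Matrix m n ℝ) (P : Matrix n m ℝ) : Prop :=
  M * P * M = M ∧ P * M * P = P ∧ (M * P)ᵀ = M * P ∧ (P * M)ᵀ = P * M

/-!
The feasible candidate is `X = A S (VᵀS)⁺ Vᵀ`: it has rank at most `k` and lies in the column
space of `C = A S`. Since `Vᵀ S (VᵀS)⁺ = I_k`, writing `E = A - A_k` and `F = E S (VᵀS)⁺` gives
`A - X = E - F Vᵀ` with `E V = 0`. Splitting a vector `x` orthogonally into `(I - V Vᵀ) x` and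
`V Vᵀ x` turns `(E - F Vᵀ) x` into `E (I - V Vᵀ) x - F Vᵀ x`, so `‖E - F Vᵀ‖₂² ≤ ‖E‖₂² + ‖F‖₂²`
by Cauchy–Schwarz, and `‖E - F Vᵀ‖_F² = ‖E‖_F² + ‖F‖_F²` because the cross terms have zero trace.
-/

open Matrix

section FullRowRank

variable {κ ι : Type*} [Fintype κ] [DecidableEq κ] [Fintype ι]

theorem Matrix.mul_eq_one_of_mul_mul_eq_self_of_rank_eq_card {M : Matrix κ ι ℝ}
    {P : Matrix ι κ ℝ} (hMPM : M * P * M = M) (hM : M.rank = Fintype.card κ) : M * P = 1 := by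
  classical
  have hsurj : Function.Surjective (toLin' M) := by
    refine LinearMap.range_eq_top.mp (Submodule.eq_top_of_finrank_eq ?_)
    rw [Module.finrank_fintype_fun_eq_card]
    exact hM
  apply toLin'.injective
  rw [toLin'_one, ← LinearMap.cancel_right hsurj, ← toLin'_mul, hMPM, LinearMap.id_comp]

end FullRowRank

section Projection

variable {m n k : Type*} [Fintype m] [Fintype n] [Fintype k]

theorem Matrix.mulVec_dotProduct_mulVec {p : Type*} [Fintype p] (M : Matrix m n ℝ)
    (N : Matrix m p ℝ) (x : n → ℝ) (y : p → ℝ) :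
    (M *ᵥ x) ⬝ᵥ (N *ᵥ y) = x ⬝ᵥ ((Mᵀ * N) *ᵥ y) := by
  rw [← mulVec_mulVec, dotProduct_mulVec x, vecMul_transpose, dotProduct_comm,
    dotProduct_mulVec, dotProduct_comm]

theorem EuclideanSpace.real_norm_sq_eq_dotProduct (x : EuclideanSpace ℝ n) :
    ‖x‖ ^ 2 = x.ofLp ⬝ᵥ x.ofLp := by
  rw [EuclideanSpace.real_norm_sq_eq]
  simp only [dotProduct, sq]

variable [DecidableEq n] [DecidableEq k] {V : Matrix n k ℝ}

theorem Matrix.transpose_mul_self_add_mul_transpose_eq_one (hV : Vᵀ * V = 1) :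
    (1 - V * Vᵀ)ᵀ * (1 - V * Vᵀ) + V * Vᵀ = 1 := by
  have hidem : V * Vᵀ * (V * Vᵀ) = V * Vᵀ := by
    rw [Matrix.mul_assoc, ← Matrix.mul_assoc Vᵀ, hV, Matrix.one_mul]
  rw [transpose_sub, transpose_one, transpose_mul, transpose_transpose, Matrix.sub_mul,
    Matrix.mul_sub, Matrix.mul_sub, hidem]
  simp only [Matrix.one_mul, Matrix.mul_one]
  abel

theorem Matrix.norm_sq_add_norm_sq_of_transpose_mul_self_eq_one
    (hV : Vᵀ * V = 1) (x : EuclideanSpace ℝ n) :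
    ‖toEuclideanLin (1 - V * Vᵀ) x‖ ^ 2 + ‖toEuclideanLin Vᵀ x‖ ^ 2 = ‖x‖ ^ 2 := by
  simp only [EuclideanSpace.real_norm_sq_eq_dotProduct, toLpLin_apply,
    mulVec_dotProduct_mulVec, transpose_transpose, ← dotProduct_add, ← add_mulVec,
    transpose_mul_self_add_mul_transpose_eq_one hV, one_mulVec]

end Projection

theorem Real.mul_add_mul_le_sqrt_mul_sqrt (a b c d : ℝ) :
    a * b + c * d ≤ √(a ^ 2 + c ^ 2) * √(b ^ 2 + d ^ 2) := by
  rw [← Real.sqrt_mul (by positivity)]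
  refine le_trans (le_abs_self _) ?_
  rw [← Real.sqrt_sq_eq_abs]
  exact Real.sqrt_le_sqrt (by nlinarith [sq_nonneg (a * d - b * c)])

section SpectralNorm

variable {m n k : Type*} [Fintype m] [Fintype n] [Fintype k] [DecidableEq n] [DecidableEq k]

theorem spec_nonneg (M : Matrix m n ℝ) : 0 ≤ spec M := norm_nonneg _

theorem norm_toEuclideanLin_le_spec_mul (M : Matrix m n ℝ) (x : EuclideanSpace ℝ n) :
    ‖toEuclideanLin M x‖ ≤ spec M * ‖x‖ :=
  (LinearMap.toContinuousLinearMap (toEuclideanLin M)).le_opNorm x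

theorem spec_le_of_forall_norm_le {M : Matrix m n ℝ} {c : ℝ} (hc : 0 ≤ c)
    (h : ∀ x : EuclideanSpace ℝ n, ‖toEuclideanLin M x‖ ≤ c * ‖x‖) : spec M ≤ c :=
  ContinuousLinearMap.opNorm_le_bound _ hc h

theorem spec_sub_mul_transpose_sq_le {E : Matrix m n ℝ} {F : Matrix m k ℝ} {V : Matrix n k ℝ}
    (hV : Vᵀ * V = 1) (hEV : E * V = 0) :
    spec (E - F * Vᵀ) ^ 2 ≤ spec E ^ 2 + spec F ^ 2 := by
  have hE : E - F * Vᵀ = E * (1 - V * Vᵀ) - F * Vᵀ := by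
    rw [Matrix.mul_sub, Matrix.mul_one, ← Matrix.mul_assoc, hEV, Matrix.zero_mul, sub_zero]
  suffices h : spec (E - F * Vᵀ) ≤ √(spec E ^ 2 + spec F ^ 2) from
    (Real.le_sqrt (spec_nonneg _) (by positivity)).mp h
  refine spec_le_of_forall_norm_le (Real.sqrt_nonneg _) fun x => ?_
  set u := toEuclideanLin (1 - V * Vᵀ) x
  set w := toEuclideanLin Vᵀ x
  have hsplit : toEuclideanLin (E - F * Vᵀ) x = toEuclideanLin E u - toEuclideanLin F w := by
    rw [hE, toLpLin_apply, sub_mulVec, ← mulVec_mulVec, ← mulVec_mulVec]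
    rfl
  calc ‖toEuclideanLin (E - F * Vᵀ) x‖
      ≤ ‖toEuclideanLin E u‖ + ‖toEuclideanLin F w‖ := hsplit ▸ norm_sub_le _ _
    _ ≤ spec E * ‖u‖ + spec F * ‖w‖ :=
      add_le_add (norm_toEuclideanLin_le_spec_mul _ _) (norm_toEuclideanLin_le_spec_mul _ _)
    _ ≤ √(spec E ^ 2 + spec F ^ 2) * √(‖u‖ ^ 2 + ‖w‖ ^ 2) :=
      Real.mul_add_mul_le_sqrt_mul_sqrt _ _ _ _
    _ = √(spec E ^ 2 + spec F ^ 2) * ‖x‖ := by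
      rw [norm_sq_add_norm_sq_of_transpose_mul_self_eq_one hV, Real.sqrt_sq (norm_nonneg x)]

end SpectralNorm

section FrobeniusNorm

variable {m n k : Type*} [Fintype m] [Fintype n] [Fintype k] [DecidableEq k]

theorem frobSq_nonneg (M : Matrix m n ℝ) : 0 ≤ frobSq M :=
  Finset.sum_nonneg fun _ _ => Finset.sum_nonneg fun _ _ => sq_nonneg _

theorem frobSq_eq_trace_transpose_mul_self (M : Matrix m n ℝ) :
    frobSq M = (Mᵀ * M).trace := by
  simp only [frobSq, trace, Matrix.mul_apply, diag_apply, transpose_apply, sq]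
  exact Finset.sum_comm

theorem frobSq_sub_mul_transpose {E : Matrix m n ℝ} {F : Matrix m k ℝ} {V : Matrix n k ℝ}
    (hV : Vᵀ * V = 1) (hEV : E * V = 0) :
    frobSq (E - F * Vᵀ) = frobSq E + frobSq F := by
  have hcross₁ : (Eᵀ * (F * Vᵀ)).trace = 0 := by
    rw [← Matrix.mul_assoc, trace_mul_cycle, ← transpose_mul, hEV, transpose_zero,
      Matrix.zero_mul, trace_zero]
  have hcross₂ : ((F * Vᵀ)ᵀ * E).trace = 0 := by
    rw [← trace_transpose, transpose_mul, transpose_transpose, hcross₁]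
  have hsquare : ((F * Vᵀ)ᵀ * (F * Vᵀ)).trace = (Fᵀ * F).trace := by
    rw [trace_mul_comm, transpose_mul, transpose_transpose, Matrix.mul_assoc F,
      ← Matrix.mul_assoc Vᵀ V, hV, Matrix.one_mul, trace_mul_comm]
  simp only [frobSq_eq_trace_transpose_mul_self, transpose_sub, Matrix.sub_mul, Matrix.mul_sub,
    trace_sub, hcross₁, hcross₂, hsquare]
  ring

end FrobeniusNorm

section RestrictedLowRankError

variable {m n r : Type*} [Fintype m] [Fintype n] [Fintype r] {A X : Matrix m n ℝ}
  {C : Matrix m r ℝ} {k : ℕ}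

theorem range_mulVecLin_mul_le {p : Type*} (M : Matrix p r ℝ) (N : Matrix r n ℝ) :
    LinearMap.range (M * N).mulVecLin ≤ LinearMap.range M.mulVecLin := by
  rw [mulVecLin_mul]
  exact LinearMap.range_comp_le_range _ _

theorem specErrIn_sq_le [DecidableEq n] (hX : X.rank ≤ k)
    (hXC : LinearMap.range X.mulVecLin ≤ LinearMap.range C.mulVecLin) :
    specErrIn A C k ^ 2 ≤ spec (A - X) ^ 2 := by
  have hnonneg : 0 ≤ specErrIn A C k :=
    Real.sInf_nonneg fun _ ⟨_, _, _, he⟩ => he ▸ spec_nonneg _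
  have hle : specErrIn A C k ≤ spec (A - X) :=
    csInf_le ⟨0, fun _ ⟨_, _, _, he⟩ => he ▸ spec_nonneg _⟩ ⟨X, hX, hXC, rfl⟩
  exact pow_le_pow_left₀ hnonneg hle 2

theorem frobSqErrIn_le (hX : X.rank ≤ k)
    (hXC : LinearMap.range X.mulVecLin ≤ LinearMap.range C.mulVecLin) :
    frobSqErrIn A C k ≤ frobSq (A - X) :=
  csInf_le ⟨0, fun _ ⟨_, _, _, he⟩ => he ▸ frobSq_nonneg _⟩ ⟨X, hX, hXC, rfl⟩

end RestrictedLowRankError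

theorem svd_column_reconstruction_general
    {m n k r : ℕ} (A : Matrix (Fin m) (Fin n) ℝ)
    (V : Matrix (Fin n) (Fin k) ℝ) (hV : Vᵀ * V = 1)
    (S : Matrix (Fin n) (Fin r) ℝ) (hrank : (Vᵀ * S).rank = k)
    (P : Matrix (Fin r) (Fin k) ℝ) (hP : IsMoorePenrose (Vᵀ * S) P) :
    specErrIn A (A * S) k ^ 2 ≤
        spec (A - A * V * Vᵀ) ^ 2 + spec ((A - A * V * Vᵀ) * S * P) ^ 2 ∧
    frobSqErrIn A (A * S) k ≤
        frobSq (A - A * V * Vᵀ) + frobSq ((A - A * V * Vᵀ) * S * P) := by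
  have hSP : Vᵀ * S * P = 1 :=
    mul_eq_one_of_mul_mul_eq_self_of_rank_eq_card hP.1 (by rw [hrank, Fintype.card_fin])
  have hEV : (A - A * V * Vᵀ) * V = 0 := by
    rw [Matrix.sub_mul, Matrix.mul_assoc (A * V), hV, Matrix.mul_one, sub_self]
  have hAX : A - A * S * P * Vᵀ = A - A * V * Vᵀ - (A - A * V * Vᵀ) * S * P * Vᵀ := by
    have hESP : (A - A * V * Vᵀ) * S * P = A * S * P - A * V := by
      rw [Matrix.sub_mul, Matrix.sub_mul, Matrix.mul_assoc (A * V), Matrix.mul_assoc (A * V),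
        hSP, Matrix.mul_one]
    rw [hESP, Matrix.sub_mul]
    abel
  have hXrank : (A * S * P * Vᵀ).rank ≤ k :=
    (rank_mul_le_right _ _).trans (rank_le_height _)
  have hXC : LinearMap.range (A * S * P * Vᵀ).mulVecLin ≤ LinearMap.range (A * S).mulVecLin := by
    rw [Matrix.mul_assoc (A * S)]
    exact range_mulVecLin_mul_le _ _
  refine ⟨(specErrIn_sq_le hXrank hXC).trans ?_, (frobSqErrIn_le hXrank hXC).trans_eq ?_⟩
  · rw [hAX]
    exact spec_sub_mul_transpose_sq_le hV hEV
  · rw [hAX]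
    exact frobSq_sub_mul_transpose hV hEV

/-- **Column reconstruction via the top `k` right singular vectors** (Lemma 3.2 of
Boutsidis–Drineas–Magdon-Ismail): let `V` be the `n × k` matrix of the top `k` right
singular vectors of `A` (so `VᵀV = I_k` and `A_k = A V Vᵀ` is a best rank-`k`
approximation of `A` in both norms).  If `S` satisfies `rank(VᵀS) = k` then, with
`C = A S`, for both `ξ = 2` and `ξ = F`,
`‖A - Π^ξ_{C,k}(A)‖_ξ² ≤ ‖A - A_k‖_ξ² + ‖(A - A_k) S (VᵀS)⁺‖_ξ²`. -/
theorem svd_column_reconstruction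
    {m n k r : ℕ} (A : Matrix (Fin m) (Fin n) ℝ) (hk : k < A.rank)
    (V : Matrix (Fin n) (Fin k) ℝ) (hV : Vᵀ * V = 1)
    (hbest2 : ∀ X : Matrix (Fin m) (Fin n) ℝ, X.rank ≤ k →
      spec (A - A * V * Vᵀ) ≤ spec (A - X))
    (hbestF : ∀ X : Matrix (Fin m) (Fin n) ℝ, X.rank ≤ k →
      frobSq (A - A * V * Vᵀ) ≤ frobSq (A - X))
    (S : Matrix (Fin n) (Fin r) ℝ) (hrank : (Vᵀ * S).rank = k)
    (P : Matrix (Fin r) (Fin k) ℝ) (hP : IsMoorePenrose (Vᵀ * S) P) :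
    specErrIn A (A * S) k ^ 2 ≤
        spec (A - A * V * Vᵀ) ^ 2 + spec ((A - A * V * Vᵀ) * S * P) ^ 2 ∧
    frobSqErrIn A (A * S) k ≤
        frobSq (A - A * V * Vᵀ) + frobSq ((A - A * V * Vᵀ) * S * P) :=
  svd_column_reconstruction_general A V hV S hrank P hP
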